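/- (Comparability of intersecting rotations.) Let I be a school matching instance and let ρ≠ρ'∈R(I). (1) If there is a student a∈A(ρ)∩A(ρ'), then ρ and ρ' are comparable in the rotation poset (R(I),⊵); moreover, ρ ▷ ρ' if and only if ρ_+(a) ≻_a ρ'_+(a). (2) If there is a school b∈B(ρ)∩B(ρ'), then ρ and ρ' are comparable in (R(I),⊵); moreover, ρ ▷ ρ' if and only if a' ≻_b a for every a∈ρ_+(b) and every a'∈ρ'_+(b). -/

import Mathlib

open Classical
open scoped ENNReal

noncomputable section

namespace SM

/-- A school matching instance: students `A`, schools `B`, strict preference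
orders over the other side plus the outside option `∅` (encoded as `none`),
and quotas `q b ≤ |A|`. -/
structure SchoolInstance (A B : Type) [Fintype A] [Fintype B] where
  prefA : A → Option B → Option B → Prop
  prefB : B → Option A → Option A → Prop
  prefA_sto : ∀ a, IsStrictTotalOrder (Option B) (prefA a)
  prefB_sto : ∀ b, IsStrictTotalOrder (Option A) (prefB b)
  q : B → ℕ
  q_le : ∀ b, q b ≤ Fintype.card A

variable {A B : Type} [Fintype A] [Fintype B] [DecidableEq A] [DecidableEq B]

/-- A matching: every student is assigned a school or the outside option, and
each school receives at most `q b` students.  (A school is implicitly paired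
with the outside option exactly when it has strictly fewer than `q b`
students, and a student is paired with the outside option exactly when it has
no school; this determines the set of pairs of the matching.) -/
structure Matching {A B : Type} [Fintype A] [Fintype B] (I : SchoolInstance A B) where
  toFun : A → Option B
  quota : ∀ b : B, (Finset.univ.filter fun a => toFun a = some b).card ≤ I.q b

instance (I : SchoolInstance A B) : Nonempty (Matching I) := by
  refine ⟨⟨fun _ => none, fun b => ?_⟩⟩
  have h : (Finset.univ.filter fun _ : A => (none : Option B) = some b) = ∅ :=
    Finset.filter_false_of_mem (by intro a _; simp)
  rw [h, Finset.card_empty]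
  exact Nat.zero_le _

/-- The students assigned to school `b`. -/
def assignedTo (I : SchoolInstance A B) (M : Matching I) (b : B) : Finset A :=
  Finset.univ.filter fun a => M.toFun a = some b

/-- School `b` has strictly fewer than `q b` students, i.e. is also paired
with the outside option. -/
def hasSlack (I : SchoolInstance A B) (M : Matching I) (b : B) : Prop :=
  (assignedTo I M b).card < I.q b

/-- `x ∈ M(b)`: the partners of school `b` (students assigned to it, plus the
outside option when it is under quota). -/
def inPartners (I : SchoolInstance A B) (M : Matching I) (b : B) (x : Option A) : Prop :=
  (∃ a : A, x = some a ∧ M.toFun a = some b) ∨ (x = none ∧ hasSlack I M b)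

/-- `M(b)` as a set. -/
def partnersSet (I : SchoolInstance A B) (M : Matching I) (b : B) : Set (Option A) :=
  {x | inPartners I M b x}

/-- The pair `ab` blocks `M`. -/
def BlocksPair (I : SchoolInstance A B) (M : Matching I) (a : A) (b : B) : Prop :=
  I.prefA a (some b) (M.toFun a) ∧ ∃ x, inPartners I M b x ∧ I.prefB b (some a) x

/-- Student `a` blocks `M` (prefers the outside option to its partner). -/
def BlocksStudent (I : SchoolInstance A B) (M : Matching I) (a : A) : Prop :=
  I.prefA a none (M.toFun a)

/-- School `b` blocks `M` (prefers the outside option to one of its partners). -/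
def BlocksSchool (I : SchoolInstance A B) (M : Matching I) (b : B) : Prop :=
  ∃ a : A, M.toFun a = some b ∧ I.prefB b none (some a)

/-- Stability: no blocking pair and no blocking agent. -/
def Stable (I : SchoolInstance A B) (M : Matching I) : Prop :=
  (¬ ∃ a b, BlocksPair I M a b) ∧ (¬ ∃ a, BlocksStudent I M a) ∧ (¬ ∃ b, BlocksSchool I M b)

/-- `M ≥ M'`: every student weakly prefers `M` to `M'`. -/
def matGE (I : SchoolInstance A B) (M M' : Matching I) : Prop :=
  ∀ a : A, M.toFun a = M'.toFun a ∨ I.prefA a (M.toFun a) (M'.toFun a)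

/-- `M' < M` in the student order. -/
def matLT (I : SchoolInstance A B) (M' M : Matching I) : Prop :=
  matGE I M M' ∧ M'.toFun ≠ M.toFun

/-- `M'` is an immediate predecessor of `M` in `(S(I), ≥)`. -/
def ImmPred (I : SchoolInstance A B) (M' M : Matching I) : Prop :=
  Stable I M' ∧ Stable I M ∧ matLT I M' M ∧
    ¬ ∃ M'' : Matching I, Stable I M'' ∧ matLT I M' M'' ∧ matLT I M'' M

/-- The type in which rotations live: pairs `(ρ₊, ρ₋)` of sets of
student/school pairs (with the outside option allowed on either side). -/
abbrev Rot (A B : Type) : Type :=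
  Finset (Option A × Option B) × Finset (Option A × Option B)

/-- The set of pairs of a matching: each student with its partner, and each
under-quota school with the outside option. -/
def pairsOf (I : SchoolInstance A B) (M : Matching I) : Finset (Option A × Option B) :=
  Finset.univ.filter fun p =>
    (∃ a : A, p = (some a, M.toFun a)) ∨ (∃ b : B, hasSlack I M b ∧ p = (none, some b))

/-- The rotation `ρ(M, M') = (M ∖ M', M' ∖ M)`. -/
def rho (I : SchoolInstance A B) (M M' : Matching I) : Rot A B :=
  (pairsOf I M \ pairsOf I M', pairsOf I M' \ pairsOf I M)

/-- `R(I)`: the set of all rotations of `I`. -/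
def RotSet (I : SchoolInstance A B) : Set (Rot A B) :=
  {r | ∃ M M' : Matching I, ImmPred I M' M ∧ r = rho I M M'}

/-- `c` is a maximal chain of stable matchings from `M0` down to `M`:
consecutive entries are immediate predecessors. -/
def chainTo (I : SchoolInstance A B) (M0 M : Matching I) (c : List (Matching I)) : Prop :=
  c.head? = some M0 ∧ c.getLast? = some M ∧ (∀ N ∈ c, Stable I N) ∧
    List.Chain' (fun X Y => ImmPred I Y X) c

/-- The set of rotations eliminated along the chain `c`. -/
def chainRots (I : SchoolInstance A B) (c : List (Matching I)) : Set (Rot A B) :=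
  {r | ∃ (i : ℕ) (X Y : Matching I), getElem? c i = some X ∧ getElem? c (i + 1) = some Y ∧ r = rho I X Y}

/-- `ρ` is exposed in `M`. -/
def Exposed (I : SchoolInstance A B) (r : Rot A B) (M : Matching I) : Prop :=
  ∃ M', ImmPred I M' M ∧ r = rho I M M'

/-- The rotation poset `ρ ⊵ ρ'` (relative to the rotation-set map `RM`):
either `ρ = ρ'`, or `ρ ∈ R_M` for every stable `M` in which `ρ'` is exposed. -/
def domRel (I : SchoolInstance A B) (RM : Matching I → Set (Rot A B)) (r r' : Rot A B) : Prop :=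
  r = r' ∨ ∀ M, Stable I M → Exposed I r' M → r ∈ RM M

/-- `ρ ▷ ρ'`. -/
def strictDom (I : SchoolInstance A B) (RM : Matching I → Set (Rot A B)) (r r' : Rot A B) : Prop :=
  domRel I RM r r' ∧ r ≠ r'

/-- `R ⊆ R(I)` is upper-closed in the rotation poset. -/
def UpperClosed (I : SchoolInstance A B) (RM : Matching I → Set (Rot A B))
    (R : Set (Rot A B)) : Prop :=
  R ⊆ RotSet I ∧ ∀ r' ∈ R, ∀ r ∈ RotSet I, domRel I RM r r' → r ∈ R

/-- `N` is the join `M ∨ M'` (least upper bound) in `(S(I), ≥)`. -/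
def IsJoin (I : SchoolInstance A B) (M M' N : Matching I) : Prop :=
  Stable I N ∧ matGE I N M ∧ matGE I N M' ∧
    ∀ P, Stable I P → matGE I P M → matGE I P M' → matGE I P N

/-- `N` is the meet `M ∧ M'` (greatest lower bound) in `(S(I), ≥)`. -/
def IsMeet (I : SchoolInstance A B) (M M' N : Matching I) : Prop :=
  Stable I N ∧ matGE I M N ∧ matGE I M' N ∧
    ∀ P, Stable I P → matGE I M P → matGE I M' P → matGE I N P

/-- `F` is a (nonempty) sublattice of the lattice of stable matchings. -/
def IsSublattice (I : SchoolInstance A B) (F : Set (Matching I)) : Prop :=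
  F.Nonempty ∧ (∀ M ∈ F, Stable I M) ∧
    (∀ M ∈ F, ∀ M' ∈ F, ∃ N ∈ F, IsJoin I M M' N) ∧
    (∀ M ∈ F, ∀ M' ∈ F, ∃ N ∈ F, IsMeet I M M' N)

/-- `ρ ~ ρ'`: the two rotations are eliminated together in every matching of `F`. -/
def rotEquiv (I : SchoolInstance A B) (RM : Matching I → Set (Rot A B))
    (F : Set (Matching I)) (r r' : Rot A B) : Prop :=
  ∀ M ∈ F, (r ∈ RM M ↔ r' ∈ RM M)

/-- The trivial meta-rotation `θ₀^F` of rotations eliminated in every matching of `F`. -/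
def theta0 (I : SchoolInstance A B) (RM : Matching I → Set (Rot A B))
    (F : Set (Matching I)) : Set (Rot A B) :=
  {r | r ∈ RotSet I ∧ ∀ M ∈ F, r ∈ RM M}

/-- The trivial meta-rotation `θ_z^F` of rotations eliminated in no matching of `F`. -/
def thetaZ (I : SchoolInstance A B) (RM : Matching I → Set (Rot A B))
    (F : Set (Matching I)) : Set (Rot A B) :=
  {r | r ∈ RotSet I ∧ ∀ M ∈ F, r ∉ RM M}

/-- `θ` is a meta-rotation of `F` (an equivalence class of `~`). -/
def IsMetaRot (I : SchoolInstance A B) (RM : Matching I → Set (Rot A B))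
    (F : Set (Matching I)) (θ : Set (Rot A B)) : Prop :=
  ∃ r ∈ RotSet I, θ = {r' | r' ∈ RotSet I ∧ rotEquiv I RM F r r'}

/-- `θ` is a proper meta-rotation of `F`. -/
def IsProperMeta (I : SchoolInstance A B) (RM : Matching I → Set (Rot A B))
    (F : Set (Matching I)) (θ : Set (Rot A B)) : Prop :=
  IsMetaRot I RM F θ ∧ θ ≠ theta0 I RM F ∧ θ ≠ thetaZ I RM F

/-- `θ ⊵^F θ'` on (proper) meta-rotations. -/
def metaDom (I : SchoolInstance A B) (RM : Matching I → Set (Rot A B))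
    (F : Set (Matching I)) (θ θ' : Set (Rot A B)) : Prop :=
  ∀ M ∈ F, θ' ⊆ RM M → θ ⊆ RM M

/-- `Θ_M`: the set of proper meta-rotations contained in `R_M`. -/
def ThetaM (I : SchoolInstance A B) (RM : Matching I → Set (Rot A B))
    (F : Set (Matching I)) (M : Matching I) : Set (Set (Rot A B)) :=
  {θ | IsProperMeta I RM F θ ∧ θ ⊆ RM M}

/-- `Θ` is an upper-closed set of proper meta-rotations. -/
def UCProper (I : SchoolInstance A B) (RM : Matching I → Set (Rot A B))
    (F : Set (Matching I)) (Θ : Set (Set (Rot A B))) : Prop :=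
  (∀ θ ∈ Θ, IsProperMeta I RM F θ) ∧
    ∀ θ' ∈ Θ, ∀ θ, IsProperMeta I RM F θ → metaDom I RM F θ θ' → θ ∈ Θ

/-- `M_R`: the stable matching whose rotation set is `R` (via definite description). -/
def MofR (I : SchoolInstance A B) (RM : Matching I → Set (Rot A B))
    (R : Set (Rot A B)) : Matching I :=
  Classical.epsilon fun M => Stable I M ∧ RM M = R

/-- `R^θ = θ₀^F ∪ ⋃ {θ' proper : θ' ⊵^F θ}`. -/
def Rup (I : SchoolInstance A B) (RM : Matching I → Set (Rot A B))
    (F : Set (Matching I)) (θ : Set (Rot A B)) : Set (Rot A B) :=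
  theta0 I RM F ∪ ⋃₀ {θ' | IsProperMeta I RM F θ' ∧ metaDom I RM F θ' θ}

/-- `R_θ = θ₀^F ∪ ⋃ {θ' proper : θ' ▷^F θ}`. -/
def Rdn (I : SchoolInstance A B) (RM : Matching I → Set (Rot A B))
    (F : Set (Matching I)) (θ : Set (Rot A B)) : Set (Rot A B) :=
  theta0 I RM F ∪ ⋃₀ {θ' | IsProperMeta I RM F θ' ∧ metaDom I RM F θ' θ ∧ θ' ≠ θ}

/-- `M^θ`. -/
def Mup (I : SchoolInstance A B) (RM : Matching I → Set (Rot A B))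
    (F : Set (Matching I)) (θ : Set (Rot A B)) : Matching I :=
  MofR I RM (Rup I RM F θ)

/-- `M_θ`. -/
def Mdn (I : SchoolInstance A B) (RM : Matching I → Set (Rot A B))
    (F : Set (Matching I)) (θ : Set (Rot A B)) : Matching I :=
  MofR I RM (Rdn I RM F θ)

/-- The meet `M ∧ M'` in the lattice of stable matchings (via definite description). -/
def meetM (I : SchoolInstance A B) (M M' : Matching I) : Matching I :=
  Classical.epsilon fun N => IsMeet I M M' N

/-- First order differential `∂f_θ = f(M^θ) − f(M_θ)`. -/
def d1 (I : SchoolInstance A B) (RM : Matching I → Set (Rot A B))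
    (F : Set (Matching I)) (f : Matching I → ℝ) (θ : Set (Rot A B)) : ℝ :=
  f (Mup I RM F θ) - f (Mdn I RM F θ)

/-- Second order differential
`∂²f_{θ,θ'} = f(M^θ ∧ M_{θ'}) + f(M_θ ∧ M^{θ'}) − f(M_θ ∧ M_{θ'}) − f(M^θ ∧ M^{θ'})`. -/
def d2 (I : SchoolInstance A B) (RM : Matching I → Set (Rot A B))
    (F : Set (Matching I)) (f : Matching I → ℝ) (θ θ' : Set (Rot A B)) : ℝ :=
  f (meetM I (Mup I RM F θ) (Mdn I RM F θ')) + f (meetM I (Mdn I RM F θ) (Mup I RM F θ'))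
    - f (meetM I (Mdn I RM F θ) (Mdn I RM F θ')) - f (meetM I (Mup I RM F θ) (Mup I RM F θ'))

/-- The greatest element `M₀^F` of `F` (via definite description). -/
def topF (I : SchoolInstance A B) (F : Set (Matching I)) : Matching I :=
  Classical.epsilon fun N => N ∈ F ∧ ∀ P ∈ F, matGE I N P

/-- Vertices of the digraph: all rotations, plus a source `s` and sink `t`. -/
abbrev Vtx (A B : Type) : Type := Rot A B ⊕ Bool

/-- The source `s`. -/
def srcV : Vtx A B := Sum.inr true

/-- The sink `t`. -/
def tgtV : Vtx A B := Sum.inr false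

/-- The value of the cut `S` for the capacity function `u`: the total capacity
of the arcs leaving `S`. -/
def cutVal (u : Vtx A B → Vtx A B → ℝ≥0∞) (S : Set (Vtx A B)) : ℝ≥0∞ :=
  ∑ p : Vtx A B × Vtx A B, if p.1 ∈ S ∧ p.2 ∉ S then u p.1 p.2 else 0

/-- The `s`-`t` cut `{s} ∪ R`. -/
def cutOf (R : Set (Rot A B)) : Set (Vtx A B) := insert srcV (Sum.inl '' R)

/-- `(u, C)` witnesses minimum cut representability of `Π(f, F)`: for every
`R ⊆ R(I)`, the cut `{s} ∪ R` has finite capacity iff `R` is upper-closed and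
`M_R ∈ F`, and in that case its value is `f(M_R) + C`. -/
def MinCutRepWith (I : SchoolInstance A B) (RM : Matching I → Set (Rot A B))
    (F : Set (Matching I)) (f : Matching I → ℝ)
    (u : Vtx A B → Vtx A B → ℝ≥0∞) (C : ℝ) : Prop :=
  ∀ R : Set (Rot A B), R ⊆ RotSet I →
    ((cutVal u (cutOf R) ≠ ⊤ ↔
        (UpperClosed I RM R ∧ ∃ M, Stable I M ∧ RM M = R ∧ M ∈ F)) ∧
      (∀ M, Stable I M → RM M = R → M ∈ F → (cutVal u (cutOf R)).toReal = f M + C))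

/-- The problem `Π(f, F)` is minimum cut representable. -/
def MinCutRep (I : SchoolInstance A B) (RM : Matching I → Set (Rot A B))
    (F : Set (Matching I)) (f : Matching I → ℝ) : Prop :=
  ∃ u C, MinCutRepWith I RM F f u C

/-- The cut digraph `D^{f,F}` (with representative rotations `rep` and
constant `γ`); capacities of parallel arcs are added. -/
def cutDigraph (I : SchoolInstance A B) (RM : Matching I → Set (Rot A B))
    (F : Set (Matching I)) (f : Matching I → ℝ)
    (rep : Set (Rot A B) → Rot A B) (γ : ℝ) : Vtx A B → Vtx A B → ℝ≥0∞ :=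
  fun x y =>
    (if ∃ θ, IsMetaRot I RM F θ ∧ ∃ r ∈ θ, ∃ r' ∈ θ, r ≠ r' ∧ x = Sum.inl r ∧ y = Sum.inl r'
      then ⊤ else 0)
    + (if ∃ θ θ', IsProperMeta I RM F θ ∧ IsProperMeta I RM F θ' ∧ θ ≠ θ' ∧
          metaDom I RM F θ' θ ∧ x = Sum.inl (rep θ) ∧ y = Sum.inl (rep θ')
        then ⊤ else 0)
    + (∑ θ : Set (Rot A B), ∑ θ' : Set (Rot A B),
        if IsProperMeta I RM F θ ∧ IsProperMeta I RM F θ' ∧ θ ≠ θ' ∧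
            x = Sum.inl (rep θ) ∧ y = Sum.inl (rep θ')
        then ENNReal.ofReal ((1 / 2) * d2 I RM F f θ θ') else 0)
    + (if (theta0 I RM F).Nonempty ∧ x = srcV ∧ y = Sum.inl (rep (theta0 I RM F))
        then ⊤ else 0)
    + (if (thetaZ I RM F).Nonempty ∧ x = Sum.inl (rep (thetaZ I RM F)) ∧ y = tgtV
        then ⊤ else 0)
    + (∑ θ : Set (Rot A B),
        if IsProperMeta I RM F θ ∧ x = Sum.inl (rep θ) ∧ y = tgtV
        then ENNReal.ofReal (d1 I RM F f θ -
          (1 / 2) * (∑ θ' : Set (Rot A B),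
            if IsProperMeta I RM F θ' ∧ θ' ≠ θ then d2 I RM F f θ θ' else 0) + γ)
        else 0)
    + (∑ θ : Set (Rot A B),
        if IsProperMeta I RM F θ ∧ x = srcV ∧ y = Sum.inl (rep θ)
        then ENNReal.ofReal γ else 0)

/-- `b` prefers `S'` to `S''`: every member of `S'` is preferred to every
member of `S'' ∖ S'`. -/
def prefersSet (I : SchoolInstance A B) (b : B) (S' S'' : Set (Option A)) : Prop :=
  ∀ x ∈ S', ∀ y ∈ S'', y ∉ S' → I.prefB b x y

/-- `A(ρ)`: students appearing in `ρ₊`. -/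
def Aof (r : Rot A B) : Set A := {a | ∃ b : B, (some a, some b) ∈ r.1}

/-- `B(ρ)`: schools appearing in `ρ₊`. -/
def Bof (r : Rot A B) : Set B := {b | ∃ a : A, (some a, some b) ∈ r.1}

/-- `ρ₊(b)`: students matched to `b` in `ρ₊`. -/
def rhoPlusB (r : Rot A B) (b : B) : Set A := {a | (some a, some b) ∈ r.1}

/-- `R^ρ = {ρ' : ρ' ⊵ ρ}`. -/
def RupRot (I : SchoolInstance A B) (RM : Matching I → Set (Rot A B))
    (r : Rot A B) : Set (Rot A B) :=
  {r' | r' ∈ RotSet I ∧ domRel I RM r' r}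

/-- `R_ρ = {ρ' : ρ' ▷ ρ}`. -/
def RdnRot (I : SchoolInstance A B) (RM : Matching I → Set (Rot A B))
    (r : Rot A B) : Set (Rot A B) :=
  {r' | r' ∈ RotSet I ∧ strictDom I RM r' r}

/-- `M^ρ`. -/
def MupRot (I : SchoolInstance A B) (RM : Matching I → Set (Rot A B))
    (r : Rot A B) : Matching I :=
  MofR I RM (RupRot I RM r)

/-- `M_ρ`. -/
def MdnRot (I : SchoolInstance A B) (RM : Matching I → Set (Rot A B))
    (r : Rot A B) : Matching I :=
  MofR I RM (RdnRot I RM r)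

/-- First order differential of `f` at a rotation: `∂f_ρ = f(M^ρ) − f(M_ρ)`. -/
def d1Rot (I : SchoolInstance A B) (RM : Matching I → Set (Rot A B))
    (f : Matching I → ℝ) (r : Rot A B) : ℝ :=
  f (MupRot I RM r) - f (MdnRot I RM r)

/-- Second order differential of `f` at a pair of distinct rotations. -/
def d2Rot (I : SchoolInstance A B) (RM : Matching I → Set (Rot A B))
    (f : Matching I → ℝ) (r r' : Rot A B) : ℝ :=
  f (meetM I (MupRot I RM r) (MdnRot I RM r')) + f (meetM I (MdnRot I RM r) (MupRot I RM r'))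
    - f (meetM I (MdnRot I RM r) (MdnRot I RM r'))
    - f (meetM I (MupRot I RM r) (MupRot I RM r'))

/-- The pair `(ρ_in, ρ_out)` characterizes the stable matchings assigning both
siblings `a, ā` to school `b`. -/
def siblingChar (I : SchoolInstance A B) (RM : Matching I → Set (Rot A B))
    (a abar : A) (b : B) (p : Rot A B × Rot A B) : Prop :=
  ∀ M : Matching I, Stable I M →
    ((M.toFun a = some b ∧ M.toFun abar = some b) ↔ (p.1 ∈ RM M ∧ p.2 ∉ RM M))

/-- Some stable matching assigns both `a` and `ā` to `b`. -/
def goodSchool (I : SchoolInstance A B) (a abar : A) (b : B) : Prop :=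
  ∃ M, Stable I M ∧ M.toFun a = some b ∧ M.toFun abar = some b

/-- The pair `(ρ_in(a,ā,b), ρ_out(a,ā,b))` (via definite description). -/
def siblingPair (I : SchoolInstance A B) (RM : Matching I → Set (Rot A B))
    (a abar : A) (b : B) : Rot A B × Rot A B :=
  Classical.epsilon fun p => p.1 ∈ RotSet I ∧ p.2 ∈ RotSet I ∧
    siblingChar I RM a abar b p ∧ strictDom I RM p.1 p.2

/-- `R_in(a, ā)`. -/
def Rin (I : SchoolInstance A B) (RM : Matching I → Set (Rot A B))
    (a abar : A) : Set (Rot A B) :=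
  {r | ∃ b, goodSchool I a abar b ∧ r = (siblingPair I RM a abar b).1}

/-- `R_out(a, ā)`. -/
def Rout (I : SchoolInstance A B) (RM : Matching I → Set (Rot A B))
    (a abar : A) : Set (Rot A B) :=
  {r | ∃ b, goodSchool I a abar b ∧ r = (siblingPair I RM a abar b).2}

/-- The indicator function: `0` when the siblings are matched to the same
school, `1` otherwise. -/
def sibIndicator (I : SchoolInstance A B) (a abar : A) : Matching I → ℝ :=
  fun M => if M.toFun a = M.toFun abar then 0 else 1

end SM

/-!
For a rotation `ρ` with `(a, b) ∈ ρ₊` and a stable matching `M`, `ρ ∈ R_M` iff `a` prefers `b`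
to `M(a)`. One direction is read off a maximal chain to `M`. For the other, if `ρ ∉ R_M`, extend
maximal chains from `M` and from the step eliminating `ρ` down to the meet of the two matchings:
the meet is stable because, as in the rural hospitals theorem, it fills every school exactly as
both matchings do. Since `R` of the meet does not depend on the chain, `ρ` is eliminated below
`M`, at a stable `P ≤ M` with `P(a) = b`.

Hence distinct rotations share no pair of `ρ₊`, and `ρ ⊵ ρ'` as soon as `a` prefers `ρ₊(a)` to
`ρ'₊(a)`. On the school side, if `ρ'` is exposed in `M` but `ρ ∉ R_M`, the matching `P` found
below the predecessor of `M` matches some `a ∈ ρ₊(b)` to `b` while `a' ∈ ρ'₊(b)` prefers `b`, so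
`b` prefers `a` to `a'`. Comparability follows from trichotomy of the preferences.
-/

namespace SM

section StrictTotalOrder

variable {α : Type*} {r : α → α → Prop} [IsStrictTotalOrder α r] {x y : α}

theorem eq_or_rel_iff_not_rel : x = y ∨ r x y ↔ ¬ r y x := by
  refine ⟨?_, fun h => ?_⟩
  · rintro (rfl | hxy) hyx
    exacts [irrefl _ hyx, asymm hxy hyx]
  · rcases trichotomous_of r x y with hxy | rfl | hyx
    exacts [Or.inr hxy, Or.inl rfl, absurd hyx h]

theorem rel_of_not_rel_of_ne (h : ¬ r x y) (hne : x ≠ y) : r y x :=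
  ((trichotomous_of r x y).resolve_left h).resolve_left hne

end StrictTotalOrder

section Order

variable {A B : Type} [Fintype A] [Fintype B] {I : SchoolInstance A B}

instance (a : A) : IsStrictTotalOrder (Option B) (I.prefA a) := I.prefA_sto a

instance (b : B) : IsStrictTotalOrder (Option A) (I.prefB b) := I.prefB_sto b

theorem Matching.toFun_injective :
    Function.Injective (Matching.toFun : Matching I → A → Option B) := by
  rintro ⟨f, _⟩ ⟨g, _⟩ rfl
  rfl

instance : Finite (Matching I) := Finite.of_injective _ Matching.toFun_injective

instance : PartialOrder (Matching I) where
  le M' M := matGE I M M'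
  le_refl _ _ := Or.inl rfl
  le_trans _ _ _ h₁₂ h₂₃ a := eq_or_rel_iff_not_rel.2 fun h₁₃ =>
    eq_or_rel_iff_not_rel.1 (h₁₂ a)
      (trans_trichotomous_right h₁₃ (eq_or_rel_iff_not_rel.1 (h₂₃ a)))
  le_antisymm _ _ h h' := Matching.toFun_injective <| funext fun a =>
    ((trichotomous_of (I.prefA a) _ _).resolve_left
      (eq_or_rel_iff_not_rel.1 (h a))).resolve_right (eq_or_rel_iff_not_rel.1 (h' a))

theorem Matching.le_iff {M' M : Matching I} :
    M' ≤ M ↔ ∀ a, ¬ I.prefA a (M'.toFun a) (M.toFun a) :=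
  forall_congr' fun _ => eq_or_rel_iff_not_rel

theorem matLT_iff_lt {M' M : Matching I} : matLT I M' M ↔ M' < M := by
  rw [lt_iff_le_and_ne, ← Matching.toFun_injective.ne_iff]
  rfl

end Order

section Stability

variable {A B : Type} [Fintype A] [Fintype B] [DecidableEq B] {I : SchoolInstance A B}
  {M N : Matching I} {a : A} {b : B}

theorem inPartners_some (h : M.toFun a = some b) : inPartners I M b (some a) :=
  .inl ⟨a, rfl, h⟩

theorem card_assignedTo_le (M : Matching I) (b : B) : (assignedTo I M b).card ≤ I.q b := by
  unfold assignedTo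
  convert M.quota b

theorem Stable.not_prefA_none (hM : Stable I M) (a : A) : ¬ I.prefA a none (M.toFun a) :=
  fun h => hM.2.1 ⟨a, h⟩

theorem Stable.prefB_some_none (hM : Stable I M) (h : M.toFun a = some b) :
    I.prefB b (some a) none :=
  rel_of_not_rel_of_ne (fun h' => hM.2.2 ⟨b, a, h, h'⟩) (Option.some_ne_none a).symm

theorem Stable.prefB_of_prefA (hM : Stable I M) (h : I.prefA a (some b) (M.toFun a))
    {x : Option A} (hx : inPartners I M b x) : I.prefB b x (some a) := by
  refine rel_of_not_rel_of_ne (fun hax => hM.1 ⟨a, b, h, x, hx, hax⟩) ?_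
  rintro rfl
  rcases hx with ⟨a', ha', hMa'⟩ | ⟨hx, -⟩
  · cases ha'
    rw [hMa'] at h
    exact irrefl _ h
  · cases hx

theorem Stable.card_assignedTo_eq (hM : Stable I M) (h : I.prefA a (some b) (M.toFun a))
    (hacc : I.prefB b (some a) none) : (assignedTo I M b).card = I.q b :=
  (card_assignedTo_le M b).antisymm <| not_lt.1 fun hslack =>
    asymm hacc (hM.prefB_of_prefA h (.inr ⟨rfl, hslack⟩))

end Stability

section Fiber

variable {A B : Type} [Fintype A] [DecidableEq B]

def fiber (f : A → Option B) (o : Option B) : Finset A := Finset.univ.filter (f · = o)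

theorem mem_fiber {f : A → Option B} {o : Option B} {a : A} : a ∈ fiber f o ↔ f a = o := by
  simp [fiber]

theorem sum_card_fiber [Fintype B] (f : A → Option B) :
    ∑ o, (fiber f o).card = Fintype.card A :=
  (Finset.card_eq_sum_card_fiberwise fun _ _ => Finset.mem_univ _).symm

end Fiber

section JoinMeet

variable {A B : Type} [Fintype A] [Fintype B] {I : SchoolInstance A B} {M N : Matching I}

def joinFun (M N : Matching I) (a : A) : Option B :=
  if I.prefA a (N.toFun a) (M.toFun a) then N.toFun a else M.toFun a

def meetFun (M N : Matching I) (a : A) : Option B :=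
  if I.prefA a (N.toFun a) (M.toFun a) then M.toFun a else N.toFun a

theorem joinFun_comm (M N : Matching I) : joinFun M N = joinFun N M := by
  funext a
  unfold joinFun
  split_ifs with hNM hMN hMN
  · exact absurd hMN (asymm hNM)
  · rfl
  · rfl
  · exact ((trichotomous_of (I.prefA a) _ _).resolve_left hMN).resolve_right hNM

theorem meetFun_comm (M N : Matching I) : meetFun M N = meetFun N M := by
  funext a
  unfold meetFun
  split_ifs with hNM hMN hMN
  · exact absurd hMN (asymm hNM)
  · rfl
  · rfl
  · exact (((trichotomous_of (I.prefA a) _ _).resolve_left hMN).resolve_right hNM).symm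

theorem joinFun_eq_and_meetFun_eq (M N : Matching I) (a : A) :
    joinFun M N a = M.toFun a ∧ meetFun M N a = N.toFun a ∨
      joinFun M N a = N.toFun a ∧ meetFun M N a = M.toFun a := by
  unfold joinFun meetFun
  split_ifs
  exacts [.inr ⟨rfl, rfl⟩, .inl ⟨rfl, rfl⟩]

theorem meetFun_eq_or (M N : Matching I) (a : A) :
    meetFun M N a = M.toFun a ∨ meetFun M N a = N.toFun a :=
  (joinFun_eq_and_meetFun_eq M N a).symm.imp And.right And.right

theorem not_prefA_joinFun (M N : Matching I) (a : A) :
    ¬ I.prefA a (M.toFun a) (joinFun M N a) := by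
  unfold joinFun
  split_ifs with hNM
  exacts [asymm hNM, irrefl _]

theorem not_prefA_meetFun (M N : Matching I) (a : A) :
    ¬ I.prefA a (meetFun M N a) (M.toFun a) := by
  unfold meetFun
  split_ifs with hNM
  exacts [irrefl _, hNM]

theorem joinFun_eq_of_ne {a : A} {b : B} (hJ : joinFun M N a = some b)
    (hM : M.toFun a ≠ some b) : N.toFun a = some b ∧ I.prefA a (some b) (M.toFun a) := by
  refine ⟨?_, rel_of_not_rel_of_ne (hJ ▸ not_prefA_joinFun M N a) hM⟩
  rcases joinFun_eq_and_meetFun_eq M N a with ⟨hJM, -⟩ | ⟨hJN, -⟩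
  exacts [absurd (hJM ▸ hJ) hM, hJN ▸ hJ]

end JoinMeet

section Meet

variable {A B : Type} [Fintype A] [Fintype B] [DecidableEq B] {I : SchoolInstance A B}
  {M N : Matching I}

theorem assignedTo_eq_fiber (M : Matching I) (b : B) :
    assignedTo I M b = fiber M.toFun (some b) :=
  rfl

theorem card_fiber_joinFun_le_q (hM : Stable I M) (hN : Stable I N) (b : B) :
    (fiber (joinFun M N) (some b)).card ≤ I.q b := by
  by_contra! hq
  obtain ⟨a₁, h₁J, h₁M⟩ :=
    Finset.exists_mem_notMem_of_card_lt_card ((card_assignedTo_le M b).trans_lt hq)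
  obtain ⟨a₂, h₂J, h₂N⟩ :=
    Finset.exists_mem_notMem_of_card_lt_card ((card_assignedTo_le N b).trans_lt hq)
  rw [joinFun_comm] at h₂J
  obtain ⟨h₁N, h₁⟩ := joinFun_eq_of_ne (mem_fiber.1 h₁J) (mt mem_fiber.2 h₁M)
  obtain ⟨h₂M, h₂⟩ := joinFun_eq_of_ne (mem_fiber.1 h₂J) (mt mem_fiber.2 h₂N)
  exact asymm (hM.prefB_of_prefA h₁ (inPartners_some h₂M))
    (hN.prefB_of_prefA h₂ (inPartners_some h₁N))

theorem card_fiber_joinFun_le (hM : Stable I M) (hN : Stable I N) (o : Option B) :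
    (fiber (joinFun M N) o).card ≤ (fiber M.toFun o).card := by
  cases o with
  | none =>
    refine Finset.card_le_card fun a ha => mem_fiber.2 ?_
    have hMJ := not_prefA_joinFun M N a
    rw [mem_fiber.1 ha] at hMJ
    exact ((trichotomous_of (I.prefA a) _ _).resolve_left hMJ).resolve_right
      (hM.not_prefA_none a)
  | some b =>
    by_cases hsub : fiber (joinFun M N) (some b) ⊆ fiber M.toFun (some b)
    · exact Finset.card_le_card hsub
    obtain ⟨a, haJ, haM⟩ := Finset.not_subset.1 hsub
    obtain ⟨haN, hpref⟩ := joinFun_eq_of_ne (mem_fiber.1 haJ) (mt mem_fiber.2 haM)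
    rw [← assignedTo_eq_fiber, hM.card_assignedTo_eq hpref (hN.prefB_some_none haN)]
    exact card_fiber_joinFun_le_q hM hN b

theorem card_fiber_joinFun_eq (hM : Stable I M) (hN : Stable I N) (o : Option B) :
    (fiber (joinFun M N) o).card = (fiber M.toFun o).card :=
  (Finset.sum_eq_sum_iff_of_le fun o _ => card_fiber_joinFun_le hM hN o).1
    (by rw [sum_card_fiber, sum_card_fiber]) o (Finset.mem_univ o)

theorem card_fiber_joinFun_add_card_fiber_meetFun (M N : Matching I) (o : Option B) :
    (fiber (joinFun M N) o).card + (fiber (meetFun M N) o).card =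
      (fiber M.toFun o).card + (fiber N.toFun o).card := by
  simp only [fiber, Finset.card_filter, ← Finset.sum_add_distrib]
  refine Finset.sum_congr rfl fun a _ => ?_
  rcases joinFun_eq_and_meetFun_eq M N a with ⟨hJ, hW⟩ | ⟨hJ, hW⟩ <;> rw [hJ, hW]
  exact add_comm _ _

theorem card_fiber_meetFun_eq (hM : Stable I M) (hN : Stable I N) (o : Option B) :
    (fiber (meetFun M N) o).card = (fiber N.toFun o).card := by
  have := card_fiber_joinFun_add_card_fiber_meetFun M N o
  rw [card_fiber_joinFun_eq hM hN o] at this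
  omega

def meetMatching (hM : Stable I M) (hN : Stable I N) : Matching I where
  toFun := meetFun M N
  quota b := by
    have h := (card_fiber_meetFun_eq hM hN (some b)).trans_le (card_assignedTo_le N b)
    unfold fiber at h
    convert h

theorem meetMatching_le_left (hM : Stable I M) (hN : Stable I N) : meetMatching hM hN ≤ M :=
  Matching.le_iff.2 (not_prefA_meetFun M N)

theorem meetMatching_le_right (hM : Stable I M) (hN : Stable I N) : meetMatching hM hN ≤ N :=
  Matching.le_iff.2 fun a => by
    change ¬ I.prefA a (meetFun M N a) (N.toFun a)
    rw [meetFun_comm]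
    exact not_prefA_meetFun N M a

/-- Half of the stability of the meet: the other half is this statement with `M` and `N`
swapped. -/
theorem not_blocksPair_of_eq_meetFun (hM : Stable I M) (hN : Stable I N) {W : Matching I}
    (hW : W.toFun = meetFun M N) {a : A} (ha : W.toFun a = M.toFun a) (b : B) :
    ¬ BlocksPair I W a b := by
  rintro ⟨hpa, x, hx, hpb⟩
  rw [ha] at hpa
  have hcard : (fiber W.toFun (some b)).card = (fiber M.toFun (some b)).card := by
    rw [hW, meetFun_comm, card_fiber_meetFun_eq hN hM]
  rcases hx with ⟨a₁, rfl, h₁W⟩ | ⟨rfl, hslack⟩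
  · by_cases h₁M : M.toFun a₁ = some b
    · exact asymm hpb (hM.prefB_of_prefA hpa (inPartners_some h₁M))
    have h₁N : N.toFun a₁ = some b := by
      rcases meetFun_eq_or M N a₁ with h | h <;> rw [← hW, h₁W] at h
      exacts [absurd h.symm h₁M, h.symm]
    have hsub : ¬ fiber M.toFun (some b) ⊆ fiber W.toFun (some b) := fun hsub =>
      h₁M (mem_fiber.1 (Finset.eq_of_subset_of_card_le hsub hcard.le ▸ mem_fiber.2 h₁W))
    obtain ⟨a₂, h₂M, h₂W⟩ := Finset.not_subset.1 hsub
    rw [mem_fiber] at h₂M h₂W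
    have h₂N : I.prefA a₂ (some b) (N.toFun a₂) := by
      rcases meetFun_eq_or M N a₂ with h | h <;> rw [← hW] at h
      · exact absurd (h.trans h₂M) h₂W
      · have hWM := not_prefA_meetFun M N a₂
        rw [← hW, h, h₂M] at hWM
        exact rel_of_not_rel_of_ne hWM (h ▸ h₂W)
    have h₁₂ := hN.prefB_of_prefA h₂N (inPartners_some h₁N)
    have h₂ := hM.prefB_of_prefA hpa (inPartners_some h₂M)
    exact irrefl _ (_root_.trans (_root_.trans hpb h₁₂) h₂)
  · exact hslack.ne (hcard.trans (hM.card_assignedTo_eq hpa hpb))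

theorem meetMatching_stable (hM : Stable I M) (hN : Stable I N) :
    Stable I (meetMatching hM hN) := by
  have hW : (meetMatching hM hN).toFun = meetFun M N := rfl
  refine ⟨fun ⟨a, b, hab⟩ => ?_, fun ⟨a, ha⟩ => ?_, fun ⟨b, a, hab, hb⟩ => ?_⟩
  · rcases meetFun_eq_or M N a with h | h
    · exact not_blocksPair_of_eq_meetFun hM hN hW h b hab
    · exact not_blocksPair_of_eq_meetFun hN hM (hW.trans (meetFun_comm M N)) h b hab
  · rcases meetFun_eq_or M N a with h | h <;> rw [BlocksStudent, hW, h] at ha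
    exacts [hM.not_prefA_none a ha, hN.not_prefA_none a ha]
  · rcases meetFun_eq_or M N a with h | h <;> rw [hW, h] at hab
    exacts [hM.2.2 ⟨b, a, hab, hb⟩, hN.2.2 ⟨b, a, hab, hb⟩]

end Meet

section Chains

variable {A B : Type} [Fintype A] [Fintype B] [DecidableEq B] {I : SchoolInstance A B}
  {H M X Y Z : Matching I} {c e : List (Matching I)}

theorem ImmPred.lt (h : ImmPred I Y X) : Y < X := matLT_iff_lt.1 h.2.2.1

theorem chainTo.isChain (hc : chainTo I H M c) : c.IsChain (fun X Y => ImmPred I Y X) :=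
  hc.2.2.2

theorem chainTo.head_mem (hc : chainTo I H M c) : H ∈ c := List.mem_of_mem_head? hc.1

theorem chainTo.last_mem (hc : chainTo I H M c) : M ∈ c := List.mem_of_mem_getLast? hc.2.1

theorem chainTo.stable (hc : chainTo I H M c) (hZ : Z ∈ c) : Stable I Z := hc.2.2.1 Z hZ

theorem chainTo_singleton (hM : Stable I M) : chainTo I M M [M] :=
  ⟨rfl, rfl, by simpa using hM, List.isChain_singleton M⟩

theorem chainTo_pair (h : ImmPred I Y X) : chainTo I X Y [X, Y] :=
  ⟨rfl, rfl, by simp [h.1, h.2.1], List.isChain_pair.2 h⟩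

theorem chainTo.append (hc : chainTo I H X c) (he : chainTo I X Z e) :
    chainTo I H Z (c ++ e.tail) := by
  obtain ⟨e, rfl⟩ := List.head?_eq_some_iff.1 he.1
  refine ⟨by rw [List.head?_append, hc.1]; rfl, ?_, ?_, ?_⟩
  · have hZ := he.2.1
    rw [List.getLast?_cons] at hZ
    rw [List.tail_cons, List.getLast?_append, hc.2.1]
    cases h : e.getLast? <;> simp_all
  · simp only [List.tail_cons, List.mem_append]
    rintro N (hN | hN)
    exacts [hc.stable hN, he.stable (List.mem_cons_of_mem X hN)]
  · have he' := he.isChain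
    rw [List.isChain_cons] at he'
    refine List.isChain_append.2 ⟨hc.isChain, he'.2, fun X' hX' Y' hY' => ?_⟩
    rw [hc.2.1, Option.mem_some_iff] at hX'
    exact hX' ▸ he'.1 Y' hY'

theorem chainTo.pairwise_ge (hc : chainTo I H M c) : c.Pairwise (· ≥ ·) :=
  (hc.isChain.imp fun _ _ h => h.lt.le).pairwise

theorem chainTo.le_head (hc : chainTo I H M c) (hZ : Z ∈ c) : Z ≤ H := by
  have hp := hc.pairwise_ge
  obtain ⟨c, rfl⟩ := List.head?_eq_some_iff.1 hc.1
  rcases List.mem_cons.1 hZ with rfl | hZ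
  exacts [le_rfl, List.rel_of_pairwise_cons hp hZ]

theorem chainTo.last_le (hc : chainTo I H M c) (hZ : Z ∈ c) : M ≤ Z := by
  have hp := hc.pairwise_ge
  obtain ⟨c, rfl⟩ := List.getLast?_eq_some_iff.1 hc.2.1
  rcases List.mem_append.1 hZ with hZ | hZ
  · exact (List.pairwise_append.1 hp).2.2 Z hZ M (List.mem_singleton_self M)
  · rw [List.mem_singleton.1 hZ]

theorem exists_chainTo (hH : Stable I H) (hM : Stable I M) (hMH : M ≤ H) :
    ∃ c, chainTo I H M c := by
  induction H using WellFoundedLT.induction with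
  | _ H ih =>
  rcases hMH.eq_or_lt with rfl | hlt
  · exact ⟨[M], chainTo_singleton hM⟩
  obtain ⟨Z, ⟨hZ, hMZ, hZH⟩, hmax⟩ := Set.Finite.exists_maximal
    (s := {Z | Stable I Z ∧ M ≤ Z ∧ Z < H}) (Set.toFinite _) ⟨M, hM, le_rfl, hlt⟩
  have hZH' : ImmPred I Z H := by
    refine ⟨hZ, hH, matLT_iff_lt.2 hZH, fun ⟨P, hP, hZP, hPH⟩ => ?_⟩
    rw [matLT_iff_lt] at hZP hPH
    exact hZP.not_ge (hmax ⟨hP, hMZ.trans hZP.le, hPH⟩ hZP.le)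
  obtain ⟨c, hc⟩ := ih Z hZH hZ hMZ
  exact ⟨_, (chainTo_pair hZH').append hc⟩

end Chains

section Rotations

variable {A B : Type} [Fintype A] [Fintype B] [DecidableEq A] [DecidableEq B]
  {I : SchoolInstance A B} {H M X Y : Matching I} {c e : List (Matching I)} {a : A} {b : B}

theorem chainRots_singleton (X : Matching I) : chainRots I [X] = ∅ :=
  Set.eq_empty_of_forall_notMem fun _ ⟨i, _, _, _, hY, _⟩ => by simp at hY

theorem chainRots_cons_cons (X Y : Matching I) (l : List (Matching I)) :
    chainRots I (X :: Y :: l) = insert (rho I X Y) (chainRots I (Y :: l)) := by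
  ext r
  constructor
  · rintro ⟨_ | i, X', Y', hX', hY', rfl⟩
    · simp only [List.getElem?_cons_zero, List.getElem?_cons_succ, Option.some.injEq] at hX' hY'
      exact .inl (hX' ▸ hY' ▸ rfl)
    · exact .inr ⟨i, X', Y', hX', hY', rfl⟩
  · rintro (rfl | ⟨i, X', Y', hX', hY', rfl⟩)
    exacts [⟨0, X, Y, rfl, rfl, rfl⟩, ⟨i + 1, X', Y', hX', hY', rfl⟩]

theorem chainRots_pair (X Y : Matching I) : chainRots I [X, Y] = {rho I X Y} := by
  rw [chainRots_cons_cons, chainRots_singleton, insert_empty_eq]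

theorem chainRots_append_tail (h : c.getLast? = e.head?) :
    chainRots I (c ++ e.tail) = chainRots I c ∪ chainRots I e := by
  induction c with
  | nil =>
    obtain rfl : e = [] := List.head?_eq_none_iff.1 h.symm
    simp
  | cons X l ih =>
    cases l with
    | nil =>
      obtain ⟨e, rfl⟩ := List.head?_eq_some_iff.1 h.symm
      simp [chainRots_singleton]
    | cons Y l =>
      rw [List.getLast?_cons_cons] at h
      simp only [List.cons_append, chainRots_cons_cons] at ih ⊢
      rw [ih h, Set.insert_union]

theorem chainTo.exists_of_mem_chainRots {r : Rot A B} (hc : chainTo I H M c)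
    (hr : r ∈ chainRots I c) :
    ∃ X Y, ImmPred I Y X ∧ X ∈ c ∧ Y ∈ c ∧ r = rho I X Y := by
  obtain ⟨i, X, Y, hX, hY, rfl⟩ := hr
  obtain ⟨hi, rfl⟩ := List.getElem?_eq_some_iff.1 hY
  obtain ⟨-, rfl⟩ := List.getElem?_eq_some_iff.1 hX
  exact ⟨_, _, hc.isChain.getElem i hi, List.getElem_mem _, List.getElem_mem _, rfl⟩

theorem mem_rho_fst :
    (some a, some b) ∈ (rho I X Y).1 ↔ X.toFun a = some b ∧ Y.toFun a ≠ some b := by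
  simp [rho, pairsOf, eq_comm]

theorem prefA_of_mem_rho_fst (hYX : Y ≤ X) (hab : (some a, some b) ∈ (rho I X Y).1) :
    I.prefA a (some b) (Y.toFun a) := by
  rw [mem_rho_fst] at hab
  exact rel_of_not_rel_of_ne (hab.1 ▸ Matching.le_iff.1 hYX a) hab.2

theorem mem_of_strictDom {RM : Matching I → Set (Rot A B)} {r r' : Rot A B}
    (hd : strictDom I RM r r') (hM : Stable I M) (hexp : Exposed I r' M) : r ∈ RM M :=
  (hd.1.resolve_left hd.2) M hM hexp

end Rotations

/-- `M0` is the student-optimal stable matching and `RM M` is the rotation set `R_M`. -/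
structure IsRotationSetMap {A B : Type} [Fintype A] [Fintype B] [DecidableEq A] [DecidableEq B]
    (I : SchoolInstance A B) (M0 : Matching I) (RM : Matching I → Set (Rot A B)) : Prop where
  stable_top : Stable I M0
  le_top : ∀ N, Stable I N → N ≤ M0
  eq_chainRots : ∀ M c, Stable I M → chainTo I M0 M c → RM M = chainRots I c

namespace IsRotationSetMap

variable {A B : Type} [Fintype A] [Fintype B] [DecidableEq A] [DecidableEq B]
  {I : SchoolInstance A B} {M0 : Matching I} {RM : Matching I → Set (Rot A B)}
  {M N X Y : Matching I} {e : List (Matching I)} {r r' : Rot A B} {a a' : A} {b b' : B}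

theorem exists_chainTo (h : IsRotationSetMap I M0 RM) (hM : Stable I M) :
    ∃ c, chainTo I M0 M c :=
  SM.exists_chainTo h.stable_top hM (h.le_top M hM)

theorem eq_union (h : IsRotationSetMap I M0 RM) (he : chainTo I M N e) :
    RM N = RM M ∪ chainRots I e := by
  have hM := he.stable he.head_mem
  obtain ⟨c, hc⟩ := h.exists_chainTo hM
  rw [h.eq_chainRots M c hM hc, h.eq_chainRots N _ (he.stable he.last_mem) (hc.append he),
    chainRots_append_tail (hc.2.1.trans he.1.symm)]

theorem eq_insert (h : IsRotationSetMap I M0 RM) (hYX : ImmPred I Y X) :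
    RM Y = insert (rho I X Y) (RM X) := by
  rw [h.eq_union (chainTo_pair hYX), chainRots_pair, Set.union_singleton]

theorem prefA_of_mem (h : IsRotationSetMap I M0 RM) (hab : (some a, some b) ∈ r.1)
    (hM : Stable I M) (hr : r ∈ RM M) : I.prefA a (some b) (M.toFun a) := by
  obtain ⟨c, hc⟩ := h.exists_chainTo hM
  rw [h.eq_chainRots M c hM hc] at hr
  obtain ⟨X, Y, hYX, -, hY, rfl⟩ := hc.exists_of_mem_chainRots hr
  exact trans_trichotomous_right (prefA_of_mem_rho_fst hYX.lt.le hab)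
    (Matching.le_iff.1 (hc.last_le hY) a)

/-- Maximal chains from `N`, and from the step of the rotation, both reach the meet `W` of `N`
and `Y`; since `R_W` does not depend on the chain, a rotation outside `R_N` lies on the first. -/
theorem exists_le_of_not_mem (h : IsRotationSetMap I M0 RM) (hr : r ∈ RotSet I)
    (hab : (some a, some b) ∈ r.1) (hN : Stable I N) (hrN : r ∉ RM N) :
    ∃ P, Stable I P ∧ P ≤ N ∧ P.toFun a = some b := by
  obtain ⟨X, Y, hYX, rfl⟩ := hr
  have hW := meetMatching_stable hN hYX.1
  obtain ⟨eN, heN⟩ := SM.exists_chainTo hN hW (meetMatching_le_left hN hYX.1)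
  obtain ⟨eY, heY⟩ := SM.exists_chainTo hYX.1 hW (meetMatching_le_right hN hYX.1)
  have hrW : rho I X Y ∈ RM (meetMatching hN hYX.1) := by
    rw [h.eq_union heY, h.eq_insert hYX]
    exact .inl (.inl rfl)
  rw [h.eq_union heN] at hrW
  obtain ⟨P, Q, hQP, hP, -, hPQ⟩ := heN.exists_of_mem_chainRots (hrW.resolve_left hrN)
  rw [hPQ, mem_rho_fst] at hab
  exact ⟨P, hQP.2.1, heN.le_head hP, hab.1⟩

theorem mem_of_prefA (h : IsRotationSetMap I M0 RM) (hr : r ∈ RotSet I)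
    (hab : (some a, some b) ∈ r.1) (hM : Stable I M) (hpa : I.prefA a (some b) (M.toFun a)) :
    r ∈ RM M := by
  by_contra hrM
  obtain ⟨P, -, hPM, hPa⟩ := h.exists_le_of_not_mem hr hab hM hrM
  exact Matching.le_iff.1 hPM a (by rwa [hPa])

theorem eq_of_mem_fst (h : IsRotationSetMap I M0 RM) (hr : r ∈ RotSet I) (hr' : r' ∈ RotSet I)
    (hab : (some a, some b) ∈ r.1) (hab' : (some a, some b) ∈ r'.1) : r = r' := by
  obtain ⟨X, Y, hYX, rfl⟩ := hr
  have hY := h.mem_of_prefA hr' hab' hYX.1 (prefA_of_mem_rho_fst hYX.lt.le hab)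
  have hX : r' ∉ RM X := fun hX => by
    have hXa := h.prefA_of_mem hab' hYX.2.1 hX
    rw [(mem_rho_fst.1 hab).1] at hXa
    exact irrefl _ hXa
  rw [h.eq_insert hYX] at hY
  exact (hY.resolve_right hX).symm

theorem domRel_of_prefA (h : IsRotationSetMap I M0 RM) (hr : r ∈ RotSet I)
    (hb : (some a, some b) ∈ r.1) (hb' : (some a, some b') ∈ r'.1)
    (hp : I.prefA a (some b) (some b')) : domRel I RM r r' := by
  refine .inr fun M hM ⟨M', _, hr'⟩ => h.mem_of_prefA hr hb hM ?_
  rw [hr', mem_rho_fst] at hb'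
  rwa [hb'.1]

theorem prefA_of_strictDom (h : IsRotationSetMap I M0 RM) (hr' : r' ∈ RotSet I)
    (hd : strictDom I RM r r') (hb : (some a, some b) ∈ r.1) (hb' : (some a, some b') ∈ r'.1) :
    I.prefA a (some b) (some b') := by
  obtain ⟨X, Y, hYX, rfl⟩ := hr'
  have hX := h.prefA_of_mem hb hYX.2.1 (mem_of_strictDom hd hYX.2.1 ⟨Y, hYX, rfl⟩)
  rwa [(mem_rho_fst.1 hb').1] at hX

theorem domRel_of_prefB (h : IsRotationSetMap I M0 RM) (hr : r ∈ RotSet I) (hne : r ≠ r')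
    (ha : (some a, some b) ∈ r.1) (ha' : (some a', some b) ∈ r'.1)
    (hp : I.prefB b (some a') (some a)) : domRel I RM r r' := by
  refine .inr fun M hM ⟨M', hM'M, hr'⟩ => by_contra fun hrM => ?_
  subst hr'
  have hrM' : r ∉ RM M' := by
    rw [h.eq_insert hM'M]
    exact fun h' => h'.elim hne hrM
  obtain ⟨P, hP, hPM', hPa⟩ := h.exists_le_of_not_mem hr ha hM'M.1 hrM'
  have ha'P : I.prefA a' (some b) (P.toFun a') :=
    trans_trichotomous_right (prefA_of_mem_rho_fst hM'M.lt.le ha') (Matching.le_iff.1 hPM' a')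
  exact asymm hp (hP.prefB_of_prefA ha'P (inPartners_some hPa))

theorem prefB_of_strictDom (h : IsRotationSetMap I M0 RM) (hr' : r' ∈ RotSet I)
    (hd : strictDom I RM r r') (ha : (some a, some b) ∈ r.1) (ha' : (some a', some b) ∈ r'.1) :
    I.prefB b (some a') (some a) := by
  obtain ⟨X, Y, hYX, rfl⟩ := hr'
  exact hYX.2.1.prefB_of_prefA
    (h.prefA_of_mem ha hYX.2.1 (mem_of_strictDom hd hYX.2.1 ⟨Y, hYX, rfl⟩))
    (inPartners_some (mem_rho_fst.1 ha').1)

theorem domRel_or_domRel_of_mem_Aof (h : IsRotationSetMap I M0 RM) (hr : r ∈ RotSet I)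
    (hr' : r' ∈ RotSet I) (hne : r ≠ r') (ha : a ∈ Aof r) (ha' : a ∈ Aof r') :
    domRel I RM r r' ∨ domRel I RM r' r := by
  obtain ⟨b, hb⟩ := ha
  obtain ⟨b', hb'⟩ := ha'
  rcases trichotomous_of (I.prefA a) (some b) (some b') with hp | hbb | hp
  · exact .inl (h.domRel_of_prefA hr hb hb' hp)
  · cases hbb
    exact absurd (h.eq_of_mem_fst hr hr' hb hb') hne
  · exact .inr (h.domRel_of_prefA hr' hb' hb hp)

theorem domRel_or_domRel_of_mem_Bof (h : IsRotationSetMap I M0 RM) (hr : r ∈ RotSet I)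
    (hr' : r' ∈ RotSet I) (hne : r ≠ r') (hb : b ∈ Bof r) (hb' : b ∈ Bof r') :
    domRel I RM r r' ∨ domRel I RM r' r := by
  obtain ⟨a, ha⟩ := hb
  obtain ⟨a', ha'⟩ := hb'
  rcases trichotomous_of (I.prefB b) (some a') (some a) with hp | haa | hp
  · exact .inl (h.domRel_of_prefB hr hne ha ha' hp)
  · cases haa
    exact absurd (h.eq_of_mem_fst hr hr' ha ha') hne
  · exact .inr (h.domRel_of_prefB hr' hne.symm ha' ha hp)

theorem strictDom_iff_prefA (h : IsRotationSetMap I M0 RM) (hr : r ∈ RotSet I)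
    (hr' : r' ∈ RotSet I) (hne : r ≠ r') (hb : (some a, some b) ∈ r.1)
    (hb' : (some a, some b') ∈ r'.1) : strictDom I RM r r' ↔ I.prefA a (some b) (some b') :=
  ⟨fun hd => h.prefA_of_strictDom hr' hd hb hb',
    fun hp => ⟨h.domRel_of_prefA hr hb hb' hp, hne⟩⟩

theorem strictDom_iff_forall_prefB (h : IsRotationSetMap I M0 RM) (hr : r ∈ RotSet I)
    (hr' : r' ∈ RotSet I) (hne : r ≠ r') (hb : b ∈ Bof r) (hb' : b ∈ Bof r') :
    strictDom I RM r r' ↔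
      ∀ a ∈ rhoPlusB r b, ∀ a' ∈ rhoPlusB r' b, I.prefB b (some a') (some a) := by
  obtain ⟨a₁, ha₁⟩ := hb
  obtain ⟨a₁', ha₁'⟩ := hb'
  exact ⟨fun hd a ha a' ha' => h.prefB_of_strictDom hr' hd ha ha',
    fun hall => ⟨h.domRel_of_prefB hr hne ha₁ ha₁' (hall a₁ ha₁ a₁' ha₁'), hne⟩⟩

end IsRotationSetMap

variable {A B : Type} [Fintype A] [Fintype B] [DecidableEq A] [DecidableEq B]

/-- comparability of intersecting rotations. -/
theorem stmt13 (I : SchoolInstance A B) (M0 : Matching I)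
    (hM0 : Stable I M0 ∧ ∀ N, Stable I N → matGE I M0 N)
    (RM : Matching I → Set (Rot A B))
    (hRM : ∀ M c, Stable I M → chainTo I M0 M c → RM M = chainRots I c)
    (r r' : Rot A B) (hr : r ∈ RotSet I) (hr' : r' ∈ RotSet I) (hne : r ≠ r') :
    (∀ a : A, a ∈ Aof r → a ∈ Aof r' →
      (domRel I RM r r' ∨ domRel I RM r' r) ∧
      (∀ b b' : B, (some a, some b) ∈ r.1 → (some a, some b') ∈ r'.1 →
        (strictDom I RM r r' ↔ I.prefA a (some b) (some b')))) ∧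
    (∀ b : B, b ∈ Bof r → b ∈ Bof r' →
      (domRel I RM r r' ∨ domRel I RM r' r) ∧
      (strictDom I RM r r' ↔
        ∀ a ∈ rhoPlusB r b, ∀ a' ∈ rhoPlusB r' b, I.prefB b (some a') (some a))) := by
  have h : IsRotationSetMap I M0 RM := ⟨hM0.1, hM0.2, hRM⟩
  exact ⟨fun a ha ha' => ⟨h.domRel_or_domRel_of_mem_Aof hr hr' hne ha ha',
      fun b b' hb hb' => h.strictDom_iff_prefA hr hr' hne hb hb'⟩,
    fun b hb hb' => ⟨h.domRel_or_domRel_of_mem_Bof hr hr' hne hb hb',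
      h.strictDom_iff_forall_prefB hr hr' hne hb hb'⟩⟩

end SM
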